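/- arXiv:2501.15857 — 2 statements merged into one kernel-verified Lean document; each statement's English description precedes it below -/
import Mathlib

section
/- Let x : Fin n → ℝ (n ≥ 1) be a score vector with set of maximizers M = {i : x_i = max_j x_j}, and let v : Fin n → ℝ^d be an arbitrary family of value vectors in Euclidean space ℝ^d. Then the attention output ∑_{i} softmax_β(x)_i • v_i converges, as β → ∞, to the average (1/|M|) ∑_{i ∈ M} v_i of the values at the maximizing positions. -/
/-!
Subtracting the maximum score `m` from every score leaves the softmax unchanged. After the shift,
`exp (β * (x i - m))` tends to `1` at the maximizers and to `0` elsewhere, so the normalizing sum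
tends to the number of maximizers and each weight to `1 / |M|` on `M` and to `0` off it.
-/

open Filter Topology Finset

noncomputable section

variable {ι : Type*} [Fintype ι]

def softmax (β : ℝ) (x : ι → ℝ) (i : ι) : ℝ :=
  Real.exp (β * x i) / ∑ j, Real.exp (β * x j)

theorem softmax_sub_const (β c : ℝ) (x : ι → ℝ) :
    softmax β (fun j => x j - c) = softmax β x := by
  funext i
  have hshift : ∀ j, Real.exp (β * (x j - c)) = Real.exp (β * x j) * Real.exp (-(β * c)) := by
    intro j
    rw [← Real.exp_add, mul_sub, sub_eq_add_neg]
  simp only [softmax, hshift, ← Finset.sum_mul]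
  exact mul_div_mul_right _ _ (Real.exp_pos _).ne'

theorem Real.tendsto_exp_mul_atTop_of_nonpos {c : ℝ} (hc : c ≤ 0) :
    Tendsto (fun β : ℝ => Real.exp (β * c)) atTop (𝓝 (if c = 0 then 1 else 0)) := by
  rcases hc.lt_or_eq with hneg | rfl
  · rw [if_neg hneg.ne]
    exact Real.tendsto_exp_atBot.comp (tendsto_id.atTop_mul_const_of_neg hneg)
  · simp

variable [Nonempty ι]

def maximizers (x : ι → ℝ) : Finset ι :=
  univ.filter fun k => x k = univ.sup' univ_nonempty x

theorem maximizers_nonempty (x : ι → ℝ) : (maximizers x).Nonempty := by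
  obtain ⟨i, -, hi⟩ := exists_mem_eq_sup' univ_nonempty x
  exact ⟨i, mem_filter.mpr ⟨mem_univ i, hi.symm⟩⟩

theorem tendsto_softmax_atTop [DecidableEq ι] (x : ι → ℝ) (i : ι) :
    Tendsto (fun β => softmax β x i) atTop
      (𝓝 (if i ∈ maximizers x then (#(maximizers x) : ℝ)⁻¹ else 0)) := by
  set m := univ.sup' univ_nonempty x
  have hmem : ∀ j, x j - m = 0 ↔ j ∈ maximizers x := by
    intro j
    simp [maximizers, m, sub_eq_zero]
  have hexp : ∀ j, Tendsto (fun β : ℝ => Real.exp (β * (x j - m))) atTop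
      (𝓝 (if j ∈ maximizers x then 1 else 0)) := by
    intro j
    simp_rw [← hmem]
    exact Real.tendsto_exp_mul_atTop_of_nonpos (sub_nonpos.mpr (le_sup' x (mem_univ j)))
  have hsum : Tendsto (fun β : ℝ => ∑ j, Real.exp (β * (x j - m))) atTop
      (𝓝 (#(maximizers x) : ℝ)) := by
    have := tendsto_finsetSum univ fun j _ => hexp j
    rwa [sum_boole, filter_mem_eq_inter, univ_inter] at this
  have hcard : (#(maximizers x) : ℝ) ≠ 0 := by
    exact_mod_cast (maximizers_nonempty x).card_pos.ne'
  rw [← funext fun β => congrFun (softmax_sub_const β m x) i]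
  convert (hexp i).div hsum hcard using 1
  congr 1
  split_ifs <;> simp

theorem tendsto_sum_softmax_smul_atTop {E : Type*} [AddCommMonoid E] [Module ℝ E]
    [TopologicalSpace E] [ContinuousAdd E] [ContinuousSMul ℝ E] (x : ι → ℝ) (v : ι → E) :
    Tendsto (fun β => ∑ i, softmax β x i • v i) atTop
      (𝓝 ((#(maximizers x) : ℝ)⁻¹ • ∑ i ∈ maximizers x, v i)) := by
  classical
  have := tendsto_finsetSum univ fun i _ => (tendsto_softmax_atTop x i).smul_const (v i)
  convert this using 2
  simp only [smul_sum, ite_smul, zero_smul, sum_ite_mem, univ_inter]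

end

/-- **Infinite-temperature attention averages the values at the maximizing positions.**
For scores `x : Fin (n+1) → ℝ` with maximizer set `M` and values
`v : Fin (n+1) → ℝ^d`, the attention output `∑ i, softmax_β(x)_i • v i` converges,
as `β → ∞`, to `(1/|M|) • ∑ i ∈ M, v i`. -/
theorem attention_tendsto_average_over_argmax
    (n d : ℕ) (x : Fin (n + 1) → ℝ) (v : Fin (n + 1) → EuclideanSpace ℝ (Fin d)) :
    Filter.Tendsto
      (fun β : ℝ => ∑ i, (Real.exp (β * x i) / ∑ j, Real.exp (β * x j)) • v i)
      Filter.atTop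
      (nhds ((1 / ((Finset.univ.filter
          (fun k => x k = Finset.univ.sup' Finset.univ_nonempty x)).card : ℝ)) •
        ∑ i ∈ Finset.univ.filter
          (fun k => x k = Finset.univ.sup' Finset.univ_nonempty x), v i)) := by
  rw [one_div]
  exact tendsto_sum_softmax_smul_atTop x v
end

section
/- Let S be a finite set of cardinality n ≥ 1 in a type α and let v ∈ α with v ∉ S. Sample L uniformly from {1, …, n}, independently sample a uniformly random bijection σ : Fin n → S, and form the random word W = (σ(0), …, σ(L−1), v) of length L + 1, consisting of the first L elements of the random ordering followed by v. Then for every h with 1 ≤ h ≤ n and every injective tuple (c_1, …, c_h) of distinct elements of S such that the event {the word has length at least h + 1 and its first h letters are (c_1, …, c_h)} has positive probability, the conditional distribution of the (h+1)-st letter of W given that event is the uniform distribution on (S \ {c_1, …, c_h}) ∪ {v}, a set of cardinality n − h + 1. -/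
def contextWord {α : Type*} {n : ℕ} (S : Finset α) (v : α)
    (p : ℕ × (Fin n → ↥S)) : List α :=
  ((List.ofFn fun i : Fin n => ((p.2 i : α))).take p.1) ++ [v]

lemma cw_length {α : Type*} {n : ℕ} (S : Finset α) (v : α) (L : ℕ) (σ : Fin n → ↥S)
    (hL : L ≤ n) : (contextWord S v (L, σ)).length = L + 1 := by
  simp [contextWord]; omega

lemma cw_take {α : Type*} {n h : ℕ} (S : Finset α) (v : α) (L : ℕ) (σ : Fin n → ↥S)
    (hL : L ≤ n) (hhL : h ≤ L) (c : Fin h → α) :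
    ((contextWord S v (L, σ)).take h = List.ofFn c ↔
      ∀ i : Fin h, (σ ⟨i, lt_of_lt_of_le i.2 (hhL.trans hL)⟩ : α) = c i) := by
  rw [contextWord]
  rw [List.take_append_of_le_length (by simp; omega)]
  rw [List.take_take, min_eq_left hhL]
  constructor
  · intro heq i
    have := congrArg (fun l => l.getD i.val v) heq
    simpa [List.getD, List.getElem?_take, i.2, lt_of_lt_of_le i.2 (hhL.trans hL)] using this
  · intro hi
    apply List.ext_getElem
    · simp; omega
    · intro k hk1 hk2
      have hk : k < h := by simpa using hk2
      simp [List.getElem_take, hk, hi ⟨k, hk⟩]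

lemma cw_getD {α : Type*} {n h : ℕ} (S : Finset α) (v : α) (L : ℕ) (σ : Fin n → ↥S)
    (hL : L ≤ n) (hhL : h ≤ L) :
    (contextWord S v (L, σ)).getD h v =
      if hlt : h < L then (σ ⟨h, lt_of_lt_of_le hlt hL⟩ : α) else v := by
  rw [contextWord]
  split
  · rename_i hlt
    rw [List.getD_eq_getElem _ _ (by simp; omega)]
    rw [List.getElem_append_left (by simp only [List.length_take, List.length_ofFn]; omega)]
    simp [List.getElem_take]
  · have hEq : h = L := le_antisymm hhL (not_lt.mp (by assumption))
    subst hEq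
    rw [List.getD_eq_getElem _ _ (by simp; omega)]
    rw [List.getElem_append_right (by simp only [List.length_take, List.length_ofFn]; omega)]
    simp

set_option maxHeartbeats 1000000 in
/-- **Conditional law of the next token in a contextual block.** Let `S` be a finite
set of cardinality `n ≥ 1` and `v ∉ S`.  Sample `L` uniformly from `{1, …, n}` and,
independently, a uniformly random bijection `σ : Fin n → S`, forming the word
`W = (σ 0, …, σ (L−1), v)`.  For `1 ≤ h ≤ n` and an injective tuple `c : Fin h → α`
of elements of `S`, conditionally on the event `E` that `W` has length at least
`h + 1` and its first `h` letters are `c` (assumed of positive probability), the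
`(h+1)`-st letter of `W` is uniform on `(S \ range c) ∪ {v}`, a set of cardinality
`n − h + 1`.  (The sample space `Ω` is uniform over `Icc 1 n × {bijections}`, so
conditional probabilities are ratios of counts of outcomes.) -/
theorem next_token_conditional_uniform
    {α : Type*} [DecidableEq α] (n : ℕ) (hn : 1 ≤ n)
    (S : Finset α) (hS : S.card = n) (v : α) (hv : v ∉ S)
    (h : ℕ) (hh : 1 ≤ h) (hhn : h ≤ n)
    (c : Fin h → α) (hc_inj : Function.Injective c) (hc_mem : ∀ i, c i ∈ S)
    (Ω : Finset (ℕ × (Fin n → ↥S)))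
    (hΩ : Ω = (Finset.Icc 1 n) ×ˢ
      (Finset.univ.filter fun f : Fin n → ↥S => Function.Bijective f))
    (E : ℕ × (Fin n → ↥S) → Prop)
    (hE : E = fun p => h + 1 ≤ (contextWord S v p).length ∧
      (contextWord S v p).take h = List.ofFn c)
    [DecidablePred E]
    (hpos : 0 < (Ω.filter E).card) :
    (∀ y : α,
      ((Ω.filter fun p => E p ∧ (contextWord S v p).getD h v = y).card : ℝ) /
        ((Ω.filter E).card : ℝ) =
      if y ∈ (S \ Finset.image c Finset.univ) ∪ {v}
        then 1 / ((n : ℝ) - h + 1) else 0) ∧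
    ((S \ Finset.image c Finset.univ) ∪ {v}).card = n - h + 1 := by
  classical
  haveI : Nonempty (Fin n) := ⟨⟨0, hn⟩⟩
  set T : Finset α := (S \ Finset.image c Finset.univ) ∪ {v} with hT
  have him : (Finset.image c Finset.univ).card = h := by
    rw [Finset.card_image_of_injective _ hc_inj, Finset.card_univ, Fintype.card_fin]
  have himsub : Finset.image c Finset.univ ⊆ S := by
    intro x hx
    obtain ⟨i, _, rfl⟩ := Finset.mem_image.mp hx
    exact hc_mem i
  have hTcard : T.card = n - h + 1 := by
    rw [hT, Finset.card_union_of_disjoint, Finset.card_sdiff_of_subset himsub, him, hS,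
      Finset.card_singleton]
    simp only [Finset.disjoint_singleton_right, Finset.mem_sdiff, not_and]
    intro hvS; exact absurd hvS hv
  -- membership characterization of the event E
  have memE : ∀ L : ℕ, ∀ σ : Fin n → ↥S,
      ((L, σ) ∈ Ω.filter E ↔ Function.Bijective σ ∧ h ≤ L ∧ L ≤ n ∧
        ∀ i : Fin h, (σ ⟨i, lt_of_lt_of_le i.2 hhn⟩ : α) = c i) := by
    intro L σ
    rw [Finset.mem_filter, hΩ, Finset.mem_product, Finset.mem_Icc, Finset.mem_filter]
    constructor
    · rintro ⟨⟨⟨h1, h2⟩, _, hbij⟩, hEp⟩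
      rw [hE] at hEp
      obtain ⟨hlen, htake⟩ := hEp
      rw [cw_length S v L σ h2] at hlen
      have hhL : h ≤ L := by omega
      rw [cw_take S v L σ h2 hhL c] at htake
      exact ⟨hbij, hhL, h2, fun i => htake i⟩
    · rintro ⟨hbij, hhL, h2, hag⟩
      refine ⟨⟨⟨by omega, h2⟩, Finset.mem_univ _, hbij⟩, ?_⟩
      rw [hE]
      refine ⟨by rw [cw_length S v L σ h2]; omega, ?_⟩
      rw [cw_take S v L σ h2 hhL c]
      exact hag
  -- membership characterization of fibers
  have memF : ∀ y : α, ∀ L : ℕ, ∀ σ : Fin n → ↥S,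
      ((L, σ) ∈ Ω.filter (fun p => E p ∧ (contextWord S v p).getD h v = y) ↔
        Function.Bijective σ ∧ h ≤ L ∧ L ≤ n ∧
        (∀ i : Fin h, (σ ⟨i, lt_of_lt_of_le i.2 hhn⟩ : α) = c i) ∧
        ((h < L ∧ (σ ⟨min h (n-1), by omega⟩ : α) = y) ∨ (L = h ∧ v = y))) := by
    intro y L σ
    rw [← Finset.filter_filter, Finset.mem_filter, memE]
    constructor
    · rintro ⟨⟨hbij, hhL, h2, hag⟩, hgd⟩
      refine ⟨hbij, hhL, h2, hag, ?_⟩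
      rw [cw_getD S v L σ h2 hhL] at hgd
      by_cases hlt : h < L
      · rw [dif_pos hlt] at hgd
        left
        refine ⟨hlt, ?_⟩
        have : (⟨min h (n-1), by omega⟩ : Fin n) = ⟨h, lt_of_lt_of_le hlt h2⟩ := by
          apply Fin.ext; simp; omega
        rw [this]; exact hgd
      · rw [dif_neg hlt] at hgd
        right
        exact ⟨by omega, hgd⟩
    · rintro ⟨hbij, hhL, h2, hag, hbr⟩
      refine ⟨⟨hbij, hhL, h2, hag⟩, ?_⟩
      rw [cw_getD S v L σ h2 hhL]
      rcases hbr with ⟨hlt, hval⟩ | ⟨hLh, hval⟩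
      · rw [dif_pos hlt]
        have : (⟨min h (n-1), by omega⟩ : Fin n) = ⟨h, lt_of_lt_of_le hlt h2⟩ := by
          apply Fin.ext; simp; omega
        rw [← this]; exact hval
      · rw [dif_neg (by omega)]; exact hval
  -- all fibers over elements of T have the same cardinality as the fiber of v
  have key : ∀ y ∈ T,
      (Ω.filter (fun p => E p ∧ (contextWord S v p).getD h v = y)).card =
      (Ω.filter (fun p => E p ∧ (contextWord S v p).getD h v = v)).card := by
    intro y hyT
    rcases Finset.mem_union.mp hyT with hySd | hyv
    swap
    · rw [Finset.mem_singleton.mp hyv]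
    obtain ⟨hy, hyim⟩ := Finset.mem_sdiff.mp hySd
    -- here h < n since y ∈ S \ image c
    have hhn' : h < n := by
      have : (S \ Finset.image c Finset.univ).Nonempty := ⟨y, hySd⟩
      have := Finset.card_pos.mpr this
      rw [Finset.card_sdiff_of_subset himsub, him, hS] at this
      omega
    have hmin : (⟨min h (n-1), by omega⟩ : Fin n) = ⟨h, hhn'⟩ := by
      apply Fin.ext; simp; omega
    symm
    -- bijection: (h, σ) ↦ (j+1, σ ∘ swap ⟨h⟩ j) where σ j = y
    refine Finset.card_bij'
      (i := fun p _ => (((Function.invFun p.2 (⟨y, hy⟩ : ↥S)) : Fin n).val + 1,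
        p.2 ∘ (Equiv.swap (⟨h, hhn'⟩ : Fin n) (Function.invFun p.2 (⟨y, hy⟩ : ↥S)))))
      (j := fun p _ => (h,
        p.2 ∘ (Equiv.swap (⟨h, hhn'⟩ : Fin n) (⟨min (p.1 - 1) (n-1), by omega⟩ : Fin n))))
      ?_ ?_ ?_ ?_
    · -- maps fiber(v) into fiber(y)
      rintro ⟨L, σ⟩ hp
      dsimp only
      rw [memF] at hp
      obtain ⟨hbij, hhL, h2, hag, hbr⟩ := hp
      have hLh : L = h := by
        rcases hbr with ⟨_, hval⟩ | ⟨hLh, _⟩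
        · exact absurd (hval ▸ (σ _).2) hv
        · exact hLh
      set j : Fin n := Function.invFun σ (⟨y, hy⟩ : ↥S) with hjdef
      have hj : σ j = ⟨y, hy⟩ := Function.invFun_eq (hbij.2 _)
      have hjh : h ≤ (j : ℕ) := by
        by_contra hjlt
        push_neg at hjlt
        have : σ ⟨(j : ℕ), lt_of_lt_of_le (by omega : (j:ℕ) < h) hhn⟩ = σ j := by
          congr 1
        have hcj := hag ⟨(j : ℕ), by omega⟩
        rw [this, hj] at hcj
        exact hyim (Finset.mem_image.mpr ⟨⟨(j:ℕ), by omega⟩, Finset.mem_univ _, hcj.symm⟩)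
      have hjn2 : (j : ℕ) < n := j.2
      rw [memF]
      refine ⟨hbij.comp (Equiv.swap _ _).bijective, by omega, by omega, ?_, ?_⟩
      · intro i
        have hne1 : (⟨(i:ℕ), lt_of_lt_of_le i.2 hhn⟩ : Fin n) ≠ ⟨h, hhn'⟩ := by
          simp only [ne_eq, Fin.mk.injEq]; omega
        have hne2 : (⟨(i:ℕ), lt_of_lt_of_le i.2 hhn⟩ : Fin n) ≠ j := by
          intro hEq
          have : (i : ℕ) = (j : ℕ) := congrArg Fin.val hEq
          omega
        simp only [Function.comp_apply, Equiv.swap_apply_of_ne_of_ne hne1 hne2]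
        exact hag i
      · left
        refine ⟨by omega, ?_⟩
        rw [hmin]
        simp only [Function.comp_apply, Equiv.swap_apply_left]
        rw [hj]
    · -- maps fiber(y) into fiber(v)
      rintro ⟨L, σ⟩ hp
      dsimp only
      rw [memF] at hp
      obtain ⟨hbij, hhL, h2, hag, hbr⟩ := hp
      have hbr' : h < L ∧ (σ ⟨h, hhn'⟩ : α) = y := by
        rcases hbr with ⟨hlt, hval⟩ | ⟨_, hval⟩
        · rw [hmin] at hval; exact ⟨hlt, hval⟩
        · exact absurd (hval ▸ hy) hv
      obtain ⟨hlt, hval⟩ := hbr'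
      have hj' : min (L - 1) (n - 1) = L - 1 := by omega
      rw [memF]
      refine ⟨hbij.comp (Equiv.swap _ _).bijective, le_refl h, hhn, ?_, Or.inr ⟨rfl, rfl⟩⟩
      intro i
      have hne1 : (⟨(i:ℕ), lt_of_lt_of_le i.2 hhn⟩ : Fin n) ≠ ⟨h, hhn'⟩ := by
        simp only [ne_eq, Fin.mk.injEq]; omega
      have hne2 : (⟨(i:ℕ), lt_of_lt_of_le i.2 hhn⟩ : Fin n) ≠ ⟨min (L-1) (n-1), by omega⟩ := by
        simp only [ne_eq, Fin.mk.injEq]; omega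
      simp only [Function.comp_apply, Equiv.swap_apply_of_ne_of_ne hne1 hne2]
      exact hag i
    · -- left inverse
      rintro ⟨L, σ⟩ hp
      dsimp only
      rw [memF] at hp
      obtain ⟨hbij, hhL, h2, hag, hbr⟩ := hp
      have hLh : L = h := by
        rcases hbr with ⟨_, hval⟩ | ⟨hLh, _⟩
        · exact absurd (hval ▸ (σ _).2) hv
        · exact hLh
      set j : Fin n := Function.invFun σ (⟨y, hy⟩ : ↥S) with hjdef
      have hjn : (j : ℕ) ≤ n - 1 := by omega
      have hjfix : (⟨min ((j:ℕ) + 1 - 1) (n-1), by omega⟩ : Fin n) = j := by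
        apply Fin.ext; simp; omega
      simp only [hjfix]
      refine Prod.ext (by simpa using hLh.symm) ?_
      funext x
      simp [Equiv.swap_apply_self]
    · -- right inverse
      rintro ⟨L, σ⟩ hp
      dsimp only
      rw [memF] at hp
      obtain ⟨hbij, hhL, h2, hag, hbr⟩ := hp
      have hbr' : h < L ∧ (σ ⟨h, hhn'⟩ : α) = y := by
        rcases hbr with ⟨hlt, hval⟩ | ⟨_, hval⟩
        · rw [hmin] at hval; exact ⟨hlt, hval⟩
        · exact absurd (hval ▸ hy) hv
      obtain ⟨hlt, hval⟩ := hbr'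
      set j : Fin n := ⟨min (L - 1) (n - 1), by omega⟩ with hjdef
      set σ'' : Fin n → ↥S := σ ∘ (Equiv.swap (⟨h, hhn'⟩ : Fin n) j) with hsdef
      have hσ''j : σ'' j = ⟨y, hy⟩ := by
        rw [hsdef]
        simp only [Function.comp_apply, Equiv.swap_apply_right]
        exact Subtype.ext hval
      have hinv : Function.invFun σ'' (⟨y, hy⟩ : ↥S) = j := by
        rw [← hσ''j]
        exact Function.leftInverse_invFun ((hbij.comp (Equiv.swap _ _).bijective).1) j
      simp only [hinv]
      refine Prod.ext ?_ ?_
      · show (j : ℕ) + 1 = L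
        simp [hjdef]; omega
      · show σ'' ∘ (Equiv.swap (⟨h, hhn'⟩ : Fin n) j) = σ
        funext x
        simp [hsdef, Equiv.swap_apply_self]
  -- total count: |E| = |T| * N
  set N : ℕ := (Ω.filter (fun p => E p ∧ (contextWord S v p).getD h v = v)).card with hN
  have hfib : ∀ p ∈ Ω.filter E, (contextWord S v p).getD h v ∈ T := by
    rintro ⟨L, σ⟩ hp
    rw [memE] at hp
    obtain ⟨hbij, hhL, h2, hag⟩ := hp
    rw [cw_getD S v L σ h2 hhL]
    split
    · rename_i hlt
      apply Finset.mem_union_left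
      rw [Finset.mem_sdiff]
      refine ⟨(σ _).2, ?_⟩
      intro hmem
      obtain ⟨i, _, hci⟩ := Finset.mem_image.mp hmem
      have := hag i
      rw [hci] at this
      have heq := Subtype.coe_injective this
      have := congrArg Fin.val ((hbij.1) heq)
      simp at this
      omega
    · exact Finset.mem_union_right _ (Finset.mem_singleton_self v)
  have htotal : (Ω.filter E).card = (n - h + 1) * N := by
    rw [Finset.card_eq_sum_card_fiberwise hfib]
    have step : ∀ y ∈ T,
        ((Ω.filter E).filter (fun a => (contextWord S v a).getD h v = y)).card = N := by
      intro y hy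
      rw [Finset.filter_filter]
      exact key y hy
    rw [Finset.sum_congr rfl step, Finset.sum_const, hTcard, smul_eq_mul]
  have hNpos : 0 < N := by
    by_contra hN0
    push_neg at hN0
    interval_cases N
    · omega
  constructor
  · intro y
    by_cases hyT : y ∈ T
    · rw [if_pos hyT]
      have hfc : (Ω.filter (fun p => E p ∧ (contextWord S v p).getD h v = y)).card = N :=
        key y hyT
      rw [hfc, htotal]
      have hcast : ((n : ℝ) - h + 1) = ((n - h + 1 : ℕ) : ℝ) := by
        push_cast [hhn]
        ring
      rw [hcast]
      rw [Nat.cast_mul]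
      rw [div_eq_div_iff (by positivity) (by positivity)]
      ring
    · rw [if_neg hyT]
      have : (Ω.filter (fun p => E p ∧ (contextWord S v p).getD h v = y)) = ∅ := by
        apply Finset.filter_false_of_mem
        rintro ⟨L, σ⟩ hp hEy
        have hmem : (L, σ) ∈ Ω.filter (fun p => E p ∧ (contextWord S v p).getD h v = y) := by
          rw [Finset.mem_filter]; exact ⟨hp, hEy⟩
        have hpe : (L, σ) ∈ Ω.filter E := by
          rw [Finset.mem_filter]; exact ⟨hp, hEy.1⟩
        have := hfib _ hpe
        rw [hEy.2] at this
        exact hyT this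
      rw [this]
      simp
  · exact hTcard
end
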